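/- Assume Hypothesis (*). Let H be a subgroup of S isomorphic to S_1 and suppose H is normalized by the diagonal D = C_S(φ). Then H is a d-subgroup of S. -/

import Mathlib

namespace EngelPaper

variable {G : Type*}

/-- The commutator `[a,b] = a⁻¹b⁻¹ab` (left-normed convention of the paper). -/
def pc [Group G] (a b : G) : G := a⁻¹ * b⁻¹ * a * b

/-- The left-normed Engel commutator `[x, g, g, ..., g]` with `g` repeated `n` times. -/
def engel [Group G] (g x : G) : ℕ → G
  | 0 => x
  | n + 1 => pc (engel g x n) g

/-- The subgroup `E_n(g)` generated by all `[x, g, ..., g]` (`g` repeated `n` times), `x ∈ G`. -/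
def Esub [Group G] (g : G) (n : ℕ) : Subgroup G :=
  Subgroup.closure { y | ∃ x : G, y = engel g x n }

/-- The left-normed Engel commutator `[x, α, ..., α]` (`α` repeated `n` times) for an
automorphism `α`, computed in the semidirect product `G⟨α⟩`; it lies in `G` and equals the
value of this function. -/
def engelAut [Group G] (α : MulAut G) (x : G) : ℕ → G
  | 0 => x
  | n + 1 => (engelAut α x n)⁻¹ * α (engelAut α x n)

/-- The subgroup `E_{G,n}(α)` generated by all `[x, α, ..., α]`, `x ∈ G`. -/
def EsubAut [Group G] (α : MulAut G) (n : ℕ) : Subgroup G :=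
  Subgroup.closure { y | ∃ x : G, y = engelAut α x n }

theorem normal_sSup_of_conj_invariant [Group G] {s : Set (Subgroup G)}
    (h : ∀ N ∈ s, ∀ g : G, Subgroup.map (MulAut.conj g).toMonoidHom N ∈ s) :
    (sSup s).Normal := by
  constructor
  intro x hx g
  have hle : sSup s ≤ (sSup s).comap ((MulAut.conj g).toMonoidHom) := by
    refine sSup_le ?_
    intro N hN y hy
    simp only [Subgroup.mem_comap]
    exact le_sSup (h N hN g) ⟨y, hy, rfl⟩
  have := hle hx
  simpa [MulAut.conj_apply] using this

theorem normal_sSup [Group G] {s : Set (Subgroup G)}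
    (h : ∀ N ∈ s, N.Normal) : (sSup s).Normal := by
  constructor
  intro x hx g
  have hle : sSup s ≤ (sSup s).comap ((MulAut.conj g).toMonoidHom) := by
    refine sSup_le ?_
    intro N hN y hy
    simp only [Subgroup.mem_comap, MulAut.conj_apply, MulEquiv.coe_toMonoidHom]
    exact le_sSup hN ((h N hN).conj_mem y hy g)
  have := hle hx
  simpa [MulAut.conj_apply] using this

/-- The Fitting subgroup: the subgroup generated by all nilpotent normal subgroups. -/
def fitting (G : Type*) [Group G] : Subgroup G :=
  sSup { N : Subgroup G | N.Normal ∧ Group.IsNilpotent N }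

theorem fitting_normal (G : Type*) [Group G] : (fitting G).Normal :=
  normal_sSup fun _ hN => hN.1

/-- One step of the Fitting series: the inverse image of the Fitting subgroup of the quotient. -/
def fitStep (G : Type*) [Group G] (N : { N : Subgroup G // N.Normal }) :
    { N : Subgroup G // N.Normal } :=
  letI := N.2
  ⟨Subgroup.comap (QuotientGroup.mk' N.1) (fitting (G ⧸ N.1)),
    (fitting_normal (G ⧸ N.1)).comap _⟩

/-- The Fitting series `F_0(G) = 1`, `F_{k+1}(G)/F_k(G) = F(G/F_k(G))`. -/
def fitSeries (G : Type*) [Group G] (n : ℕ) : Subgroup G :=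
  ((fitStep G)^[n] ⟨⊥, inferInstance⟩).1

/-- The Fitting height: the least `h` with `F_h(G) = G`. -/
noncomputable def fittingHeight (G : Type*) [Group G] : ℕ :=
  sInf { h | fitSeries G h = ⊤ }




/-- A subgroup is subnormal if it can be joined to the whole group
by a chain of successively normal subgroups. -/
def IsSubnormal [Group G] (H : Subgroup G) : Prop :=
  ∃ (n : ℕ) (c : ℕ → Subgroup G), c 0 = H ∧ c n = ⊤ ∧
    ∀ i, c i ≤ c (i + 1) ∧ ∀ x ∈ c (i + 1), ∀ y ∈ c i, x * y * x⁻¹ ∈ c i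

/-- A group is quasisimple if it is perfect and its central quotient
is a nonabelian simple group. -/
def IsQuasisimple (G : Type*) [Group G] : Prop :=
  commutator G = ⊤ ∧
    IsSimpleGroup (G ⧸ Subgroup.center G) ∧
    ∃ a b : G ⧸ Subgroup.center G, a * b ≠ b * a

theorem map_center_eq {H : Type*} [Group G] [Group H] (e : G ≃* H) :
    (Subgroup.center G).map e.toMonoidHom = Subgroup.center H := by
  ext x
  simp only [Subgroup.mem_map, Subgroup.mem_center_iff, MulEquiv.coe_toMonoidHom]
  constructor
  · rintro ⟨y, hy, rfl⟩ h
    obtain ⟨z, rfl⟩ := e.surjective h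
    rw [← map_mul, ← map_mul, hy z]
  · intro hx
    refine ⟨e.symm x, fun z => ?_, e.apply_symm_apply x⟩
    apply e.injective
    rw [map_mul, map_mul, e.apply_symm_apply]
    have := hx (e z)
    rw [this]

theorem isQuasisimple_congr {H : Type*} [Group G] [Group H] (e : G ≃* H)
    (h : IsQuasisimple G) : IsQuasisimple H := by
  obtain ⟨hcomm, hsimp, a, b, hab⟩ := h
  have hcenter : (Subgroup.center G).map e.toMonoidHom = Subgroup.center H := map_center_eq e
  have equot : (G ⧸ Subgroup.center G) ≃* (H ⧸ Subgroup.center H) :=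
    QuotientGroup.congr (Subgroup.center G) (Subgroup.center H) e hcenter
  refine ⟨?_, ?_, equot a, equot b, ?_⟩
  · have h1 : Subgroup.map e.toMonoidHom (commutator G) = commutator H := by
      rw [commutator_def, commutator_def, Subgroup.map_commutator,
        Subgroup.map_top_of_surjective _ e.surjective]
    rw [← h1, hcomm, Subgroup.map_top_of_surjective _ e.surjective]
  · haveI := hsimp
    haveI : Nontrivial (H ⧸ Subgroup.center H) := by
      rcases hsimp.exists_pair_ne with ⟨u, v, huv⟩
      exact ⟨equot u, equot v, fun hh => huv (equot.injective hh)⟩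
    exact IsSimpleGroup.isSimpleGroup_of_surjective equot.toMonoidHom equot.surjective
  · intro hcon
    apply hab
    apply equot.injective
    rw [map_mul, map_mul, hcon]

theorem isSubnormal_map_conj [Group G] {N : Subgroup G} (hN : IsSubnormal N) (w : G) :
    IsSubnormal (N.map (MulAut.conj w).toMonoidHom) := by
  obtain ⟨n, c, h0, hn, hc⟩ := hN
  refine ⟨n, fun i => (c i).map (MulAut.conj w).toMonoidHom, by simp only [h0], ?_, ?_⟩
  · simp only [hn]
    exact Subgroup.map_top_of_surjective _ (MulAut.conj w).surjective
  · intro i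
    refine ⟨Subgroup.map_mono (hc i).1, ?_⟩
    rintro x ⟨x', hx', rfl⟩ y ⟨y', hy', rfl⟩
    refine ⟨x' * y' * x'⁻¹, (hc i).2 x' hx' y' hy', ?_⟩
    simp [map_mul, map_inv]

/-- The generalized Fitting subgroup: the product of the Fitting subgroup and all
subnormal quasisimple subgroups. -/
def genFitting (G : Type*) [Group G] : Subgroup G :=
  fitting G ⊔ sSup { N : Subgroup G | IsSubnormal N ∧ IsQuasisimple N }

theorem genFitting_normal (G : Type*) [Group G] : (genFitting G).Normal := by
  have h2 : (sSup { N : Subgroup G | IsSubnormal N ∧ IsQuasisimple N }).Normal := by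
    apply normal_sSup_of_conj_invariant
    rintro N ⟨hsub, hqs⟩ g
    refine ⟨isSubnormal_map_conj hsub g, ?_⟩
    exact isQuasisimple_congr
      (Subgroup.equivMapOfInjective N _ (MulAut.conj g).injective) hqs
  haveI := fitting_normal G
  haveI := h2
  exact Subgroup.sup_normal _ _


/-- One step of the generalized Fitting series. -/
def genFitStep (G : Type*) [Group G] (N : { N : Subgroup G // N.Normal }) :
    { N : Subgroup G // N.Normal } :=
  letI := N.2
  ⟨Subgroup.comap (QuotientGroup.mk' N.1) (genFitting (G ⧸ N.1)),
    (genFitting_normal (G ⧸ N.1)).comap _⟩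

/-- The generalized Fitting series `F*_0(G) = 1`, `F*_{i+1}(G)/F*_i(G) = F*(G/F*_i(G))`. -/
def genFitSeries (G : Type*) [Group G] (n : ℕ) : Subgroup G :=
  ((genFitStep G)^[n] ⟨⊥, inferInstance⟩).1

/-- The generalized Fitting height: the least `h` with `F*_h(G) = G`. -/
noncomputable def genFittingHeight (G : Type*) [Group G] : ℕ :=
  sInf { h | genFitSeries G h = ⊤ }

/-- The soluble radical: the subgroup generated by all soluble normal subgroups. -/
def solRadical (G : Type*) [Group G] : Subgroup G :=
  sSup { N : Subgroup G | N.Normal ∧ IsSolvable N }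

theorem solRadical_normal (G : Type*) [Group G] : (solRadical G).Normal :=
  normal_sSup fun _ hN => hN.1

/-- A group is a nonabelian simple group. -/
def IsNonabelianSimple (G : Type*) [Group G] : Prop :=
  IsSimpleGroup G ∧ ∃ a b : G, a * b ≠ b * a

/-- A group is the (internal) direct product of finitely many nonabelian simple subgroups. -/
def IsProdOfSimples (Q : Type*) [Group Q] : Prop :=
  ∃ (k : ℕ) (H : Fin k → Subgroup Q),
    (∀ i, (H i).Normal) ∧ (∀ i, IsNonabelianSimple (H i)) ∧
    iSup H = ⊤ ∧ iSupIndep H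

/-- For `A ≤ B`, the factor `B/A` is soluble (stated for every proof that the
corresponding subgroup is normal). -/
def SolubleFactor [Group G] (A B : Subgroup G) : Prop :=
  ∀ h : (A.subgroupOf B).Normal, letI := h; IsSolvable (B ⧸ A.subgroupOf B)

/-- For `A ≤ B`, the factor `B/A` is a direct product of nonabelian simple groups. -/
def SimpleProdFactor [Group G] (A B : Subgroup G) : Prop :=
  ∀ h : (A.subgroupOf B).Normal, letI := h; IsProdOfSimples (B ⧸ A.subgroupOf B)

/-- For `A ≤ B`, the factor `B/A` is nonabelian simple. -/
def NonabelianSimpleFactor [Group G] (A B : Subgroup G) : Prop :=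
  ∀ h : (A.subgroupOf B).Normal, letI := h; IsNonabelianSimple (B ⧸ A.subgroupOf B)

/-- For `A ≤ B, B'`, the factors `B/A` and `B'/A` are isomorphic. -/
def IsoFactor [Group G] (A B B' : Subgroup G) : Prop :=
  ∀ (h : (A.subgroupOf B).Normal) (h' : (A.subgroupOf B').Normal),
    letI := h; letI := h'
    Nonempty ((B ⧸ A.subgroupOf B) ≃* (B' ⧸ A.subgroupOf B'))

open scoped Classical in
/-- The nonsoluble length `λ(G)`: the minimum number of nonsoluble factors in a normal
series each of whose factors either is soluble or is a direct product of nonabelian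
simple groups. -/
noncomputable def nonsolLength (G : Type*) [Group G] : ℕ :=
  sInf { k | ∃ (n : ℕ) (c : ℕ → Subgroup G), c 0 = ⊥ ∧ c n = ⊤ ∧
    (∀ i, c i ≤ c (i + 1)) ∧ (∀ i, (c i).Normal) ∧
    (∀ i < n, SolubleFactor (c i) (c (i + 1)) ∨ SimpleProdFactor (c i) (c (i + 1))) ∧
    k = ((Finset.range n).filter fun i => ¬ SolubleFactor (c i) (c (i + 1))).card }

/-- `R_i(G)`: the maximal normal subgroup of `G` of nonsoluble length at most `i`. -/
noncomputable def Rsub (G : Type*) [Group G] (i : ℕ) : Subgroup G :=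
  sSup { N : Subgroup G | N.Normal ∧ nonsolLength N ≤ i }

/-- One step of the upper nonsoluble series: from `R_{i-1}` to `L_i`
(the inverse image of the generalized Fitting subgroup of the quotient). -/
def unsStepL (G : Type*) [Group G] (R : { N : Subgroup G // N.Normal }) :
    { N : Subgroup G // N.Normal } :=
  letI := R.2
  ⟨Subgroup.comap (QuotientGroup.mk' R.1) (genFitting (G ⧸ R.1)),
    (genFitting_normal (G ⧸ R.1)).comap _⟩

/-- One step of the upper nonsoluble series: from `L_i` to `R_i`
(the inverse image of the soluble radical of the quotient). -/
def unsStepR (G : Type*) [Group G] (L : { N : Subgroup G // N.Normal }) :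
    { N : Subgroup G // N.Normal } :=
  letI := L.2
  ⟨Subgroup.comap (QuotientGroup.mk' L.1) (solRadical (G ⧸ L.1)),
    (solRadical_normal (G ⧸ L.1)).comap _⟩

/-- The terms `R_i` of the upper nonsoluble series, bundled with normality. -/
def unsRAux (G : Type*) [Group G] (n : ℕ) : { N : Subgroup G // N.Normal } :=
  (fun P => unsStepR G (unsStepL G P))^[n] ⟨solRadical G, solRadical_normal G⟩

/-- The terms `R_i` of the upper nonsoluble series of `G`:
`R_0` is the soluble radical and `R_i/L_i` is the soluble radical of `G/L_i`. -/
def unsRsub (G : Type*) [Group G] (n : ℕ) : Subgroup G := (unsRAux G n).1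

/-- The terms `L_i` of the upper nonsoluble series of `G`: `L_0 = 1` and
`L_i/R_{i-1} = F*(G/R_{i-1})` for `i ≥ 1`. -/
def unsLsub (G : Type*) [Group G] : ℕ → Subgroup G
  | 0 => ⊥
  | n + 1 => (unsStepL G (unsRAux G n)).1

/-- `T` is (the full inverse image in `G` of) one of the simple factors of the
section `U_i = L_i/R_{i-1}` of the upper nonsoluble series (`i ≥ 1`): it satisfies
`R_{i-1} ≤ T ≤ L_i`, it is normalized by `L_i`, and `T/R_{i-1}` is nonabelian simple. -/
def IsSimpleFactor (G : Type*) [Group G] (i : ℕ) (T : Subgroup G) : Prop :=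
  unsRsub G (i - 1) ≤ T ∧ T ≤ unsLsub G i ∧
  (∀ x ∈ unsLsub G i, ∀ t ∈ T, x * t * x⁻¹ ∈ T) ∧
  NonabelianSimpleFactor (unsRsub G (i - 1)) T

/-- The kernel `K_i` of the permutation action of `G` by conjugation on the set of
simple factors of the section `U_i` of the upper nonsoluble series. -/
def unsKernel (G : Type*) [Group G] (i : ℕ) : Subgroup G where
  carrier := { w | ∀ T : Subgroup G, IsSimpleFactor G i T → ∀ x : G, x ∈ T ↔ w * x * w⁻¹ ∈ T }
  one_mem' := by intro T _ x; simp
  mul_mem' := by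
    intro a b ha hb T hT x
    have h1 := hb T hT x
    have h2 := ha T hT (b * x * b⁻¹)
    have h3 : a * (b * x * b⁻¹) * a⁻¹ = (a * b) * x * (a * b)⁻¹ := by group
    rw [h3] at h2
    exact h1.trans h2
  inv_mem' := by
    intro a ha T hT x
    have h1 := ha T hT (a⁻¹ * x * a)
    have h2 : a * (a⁻¹ * x * a) * a⁻¹ = x := by group
    rw [h2] at h1
    have h3 : a⁻¹ * x * a⁻¹⁻¹ = a⁻¹ * x * a := by rw [inv_inv]
    rw [h3]
    exact h1.symm

/-- The lexicographic order on positive integers from the paper: `a ≺ b` if for some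
prime `p` the multiplicities of all primes `q < p` agree in `a` and `b` and the
multiplicity of `p` in `a` is smaller than in `b`. -/
def lexPrimeLt (a b : ℕ) : Prop :=
  ∃ p : ℕ, p.Prime ∧ (∀ q < p, q.Prime → a.factorization q = b.factorization q) ∧
    a.factorization p < b.factorization p


/-- The subgroup of a direct product consisting of the elements supported on `J`. -/
def suppSubgroup {ι : Type*} {Δ : ι → Type*} [∀ i, Group (Δ i)] (J : Set ι) :
    Subgroup (∀ i, Δ i) where
  carrier := { x | ∀ i, i ∉ J → x i = 1 }
  one_mem' := fun _ _ => rfl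
  mul_mem' := by
    intro a b ha hb i hi
    have := ha i hi; have := hb i hi
    simp_all [Pi.mul_apply]
  inv_mem' := by
    intro a ha i hi
    have := ha i hi
    simp_all [Pi.inv_apply]

/-- The `i`-th factor `S_i` of the direct product `S = S_1 × ⋯ × S_r`. -/
def factorSub {ι : Type*} {Δ : ι → Type*} [∀ i, Group (Δ i)] (i : ι) :
    Subgroup (∀ j, Δ j) :=
  suppSubgroup {i}

/-- The homomorphism of a direct product killing all coordinates outside `I`. -/
def restrictSupp {ι : Type*} {Δ : ι → Type*} [∀ i, Group (Δ i)] (I : Set ι)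
    [DecidablePred (· ∈ I)] : (∀ j, Δ j) →* (∀ j, Δ j) where
  toFun x j := if j ∈ I then x j else 1
  map_one' := by funext j; by_cases h : j ∈ I <;> simp [h]
  map_mul' := by
    intro a b; funext j; by_cases h : j ∈ I <;> simp [h]

/-- The fixed-point subgroup (in `S`) of an automorphism `φ`;
for `φ` as in Hypothesis (*), this is the diagonal `D = C_S(φ)`. -/
def fixedSub {S : Type*} [Group S] (φ : MulAut S) : Subgroup S where
  carrier := { x | φ x = x }
  one_mem' := map_one φ
  mul_mem' := by
    intro a b ha hb
    simp only [Set.mem_setOf_eq, map_mul] at *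
    rw [ha, hb]
  inv_mem' := by
    intro a ha
    simp only [Set.mem_setOf_eq, map_inv] at *
    rw [ha]

/-- The `d(I)`-subgroup determined by `φ` and a set of indices `I`: the diagonal
(with respect to `φ`) in the product of the factors `S_i`, `i ∈ I`; equivalently, the
image of the full diagonal `D = C_S(φ)` under the projection onto the coordinates in `I`. -/
def dSubgroup {r : ℕ} {Δ : Type*} [Group Δ] (φ : MulAut (Fin r → Δ)) (I : Finset (Fin r)) :
    Subgroup (Fin r → Δ) :=
  Subgroup.map (restrictSupp (↑I : Set (Fin r))) (fixedSub φ)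

/-- `K` is a `d`-subgroup (with respect to `φ`): a `d(I)`-subgroup for some nonempty `I`. -/
def IsDSubgroup {r : ℕ} {Δ : Type*} [Group Δ] (φ : MulAut (Fin r → Δ))
    (K : Subgroup (Fin r → Δ)) : Prop :=
  ∃ I : Finset (Fin r), I.Nonempty ∧ K = dSubgroup φ I

end EngelPaper

section Statements

universe u

open EngelPaper


/-! Every coordinate projection of the diagonal `D = C_S(φ)` is onto, so `D` makes each nontrivial
projection `π_j(H)` a normal, hence full, subgroup of the simple factor. Since `H` is simple, `π_j`
is injective on `H` whenever `π_j(H) ≠ 1`. Fix such an `i`; for `u ∈ H` and `d ∈ D` with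
`u i = d i`, conjugation by `u` and by `d` agree on `H`, because they agree after applying the
injective `π_i`. Reading this off at another coordinate `j` with `π_j(H) = Δ` shows that
`(u j)⁻¹ * d j` is central, hence trivial. So `H` consists of the restrictions of the elements
of `D` to the support of `H`. -/

open scoped Fin.NatCast

theorem EngelPaper.IsNonabelianSimple.center_eq_bot {G : Type*} [Group G]
    (hG : IsNonabelianSimple G) : Subgroup.center G = ⊥ := by
  have := hG.1
  refine (inferInstance : (Subgroup.center G).Normal).eq_bot_or_eq_top.resolve_right fun htop => ?_
  obtain ⟨a, b, hab⟩ := hG.2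
  exact hab (Subgroup.mem_center_iff.mp (htop ▸ Subgroup.mem_top b) a)

section Coordinates

variable {ι Δ : Type*} [Group Δ]

theorem injOn_eval_of_isSimpleGroup {H : Subgroup (ι → Δ)} [IsSimpleGroup H] {i : ι}
    (hi : ∃ h ∈ H, h i ≠ 1) : Set.InjOn (Function.eval i) (H : Set (ι → Δ)) := by
  set f := (Pi.evalMonoidHom (fun _ => Δ) i).comp H.subtype
  have hker : f.ker = ⊥ := f.normal_ker.eq_bot_or_eq_top.resolve_right fun htop => by
    obtain ⟨h, hH, hne⟩ := hi
    exact hne (f.mem_ker.mp (htop ▸ Subgroup.mem_top (⟨h, hH⟩ : H)))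
  intro u hu v hv huv
  exact congrArg Subtype.val
    ((f.ker_eq_bot_iff.mp hker) (show f (⟨u, hu⟩ : H) = f (⟨v, hv⟩ : H) from huv))

theorem map_eval_eq_top_of_normalized [IsSimpleGroup Δ] {H D : Subgroup (ι → Δ)}
    (hD : ∀ j (t : Δ), ∃ d ∈ D, d j = t) (hnorm : ∀ d ∈ D, ∀ h ∈ H, d * h * d⁻¹ ∈ H)
    {j : ι} (hj : ∃ h ∈ H, h j ≠ 1) : H.map (Pi.evalMonoidHom (fun _ => Δ) j) = ⊤ := by
  have hnormal : (H.map (Pi.evalMonoidHom (fun _ => Δ) j)).Normal := by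
    constructor
    rintro _ ⟨h, hH, rfl⟩ t
    obtain ⟨d, hdD, rfl⟩ := hD j t
    exact ⟨d * h * d⁻¹, hnorm d hdD h hH, rfl⟩
  refine hnormal.eq_bot_or_eq_top.resolve_left fun hbot => ?_
  obtain ⟨h, hH, hne⟩ := hj
  exact hne (Subgroup.mem_bot.mp (hbot ▸ Subgroup.mem_map_of_mem _ hH))

theorem apply_eq_of_apply_eq (hZ : Subgroup.center Δ = ⊥) {H : Subgroup (ι → Δ)} {i j : ι}
    (hi : Set.InjOn (Function.eval i) (H : Set (ι → Δ)))
    (hj : H.map (Pi.evalMonoidHom (fun _ => Δ) j) = ⊤)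
    {d u : ι → Δ} (hd : ∀ h ∈ H, d * h * d⁻¹ ∈ H) (hu : u ∈ H) (hud : u i = d i) :
    u j = d j := by
  have hconj : ∀ h ∈ H, u j * h j * (u j)⁻¹ = d j * h j * (d j)⁻¹ := fun h hH =>
    congrFun (hi (H.mul_mem (H.mul_mem hu hH) (H.inv_mem hu)) (hd h hH)
      (by simp [Function.eval, hud])) j
  have hcentral : (u j)⁻¹ * d j ∈ Subgroup.center Δ := by
    refine Subgroup.mem_center_iff.mpr fun t => ?_
    obtain ⟨h, hH, rfl⟩ := Subgroup.mem_map.mp (hj ▸ Subgroup.mem_top t)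
    simp only [Pi.evalMonoidHom_apply]
    calc h j * ((u j)⁻¹ * d j) = (u j)⁻¹ * (u j * h j * (u j)⁻¹) * d j := by group
      _ = (u j)⁻¹ * d j * h j := by rw [hconj h hH]; group
  rwa [hZ, Subgroup.mem_bot, inv_mul_eq_one] at hcentral

theorem eq_restrictSupp_of_apply_eq (hΔ : IsNonabelianSimple Δ) {H D : Subgroup (ι → Δ)}
    [IsSimpleGroup H] (hD : ∀ j (t : Δ), ∃ d ∈ D, d j = t)
    (hnorm : ∀ d ∈ D, ∀ h ∈ H, d * h * d⁻¹ ∈ H) {I : Set ι} [DecidablePred (· ∈ I)]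
    (hI : ∀ j, j ∈ I ↔ ∃ h ∈ H, h j ≠ 1) {i : ι} (hi : i ∈ I) {u d : ι → Δ} (hu : u ∈ H)
    (hd : d ∈ D) (hud : u i = d i) : u = restrictSupp I d := by
  have := hΔ.1
  funext j
  by_cases hj : j ∈ I
  · simp only [restrictSupp, MonoidHom.coe_mk, OneHom.coe_mk, hj, if_true]
    exact apply_eq_of_apply_eq hΔ.center_eq_bot (injOn_eval_of_isSimpleGroup ((hI i).mp hi))
      (map_eval_eq_top_of_normalized hD hnorm ((hI j).mp hj)) (hnorm d hd) hu hud
  · simp only [restrictSupp, MonoidHom.coe_mk, OneHom.coe_mk, hj, if_false]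
    by_contra hne
    exact hj ((hI j).mpr ⟨u, hu, hne⟩)

end Coordinates

section CyclicPermutation

variable {Δ : Type*} [Group Δ] {r : ℕ} [NeZero r] {φ : MulAut (Fin r → Δ)}

theorem pow_apply_mem_factorSub
    (hperm : ∀ i : Fin r,
      Subgroup.map φ.toMonoidHom (factorSub (Δ := fun _ : Fin r => Δ) i) = factorSub (i + 1))
    {i : Fin r} {x : Fin r → Δ} (hx : x ∈ factorSub (Δ := fun _ : Fin r => Δ) i) (k : ℕ) :
    (φ ^ k) x ∈ factorSub (Δ := fun _ : Fin r => Δ) (i + k) := by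
  induction k with
  | zero => simpa using hx
  | succ k ih =>
    rw [pow_succ', MulAut.mul_apply, Nat.cast_succ, ← add_assoc, ← hperm]
    exact Subgroup.mem_map_of_mem _ ih

/-- The witness is the orbit product `x * φ x * ⋯ * φ^(r-1) x` of `x = Pi.mulSingle i t`: its
factors other than `x` live in the factors `S_(i+k)`, `0 < k < r`, so they commute with `x`. -/
theorem exists_mem_fixedSub_apply_eq (hord : orderOf φ = r)
    (hperm : ∀ i : Fin r,
      Subgroup.map φ.toMonoidHom (factorSub (Δ := fun _ : Fin r => Δ) i) = factorSub (i + 1))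
    (i : Fin r) (t : Δ) : ∃ d ∈ fixedSub φ, d i = t := by
  obtain ⟨n, hn⟩ : ∃ n, r = n + 1 := Nat.exists_eq_add_one.mpr (NeZero.pos r)
  set x : Fin r → Δ := Pi.mulSingle i t
  have hx : x ∈ factorSub (Δ := fun _ : Fin r => Δ) i := fun j hj => by
    simp [x, Pi.mulSingle_eq_of_ne (Set.mem_singleton_iff.not.mp hj)]
  set P := ((List.range n).map fun k => (φ ^ (k + 1)) x).prod
  have hPi : P i = 1 := by
    refine (Pi.evalMonoidHom (fun _ => Δ) i).mem_ker.mp (list_prod_mem ?_)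
    simp only [List.mem_map, List.mem_range]
    rintro _ ⟨k, hk, rfl⟩
    refine pow_apply_mem_factorSub hperm hx (k + 1) i fun hi => ?_
    have hdvd : r ∣ k + 1 := Fin.natCast_eq_zero.mp (left_eq_add.mp hi)
    exact absurd (Nat.le_of_dvd k.succ_pos hdvd) (by omega)
  have hcomm : x * P = P * x := by
    funext j
    by_cases hj : j = i
    · subst hj; simp [hPi]
    · simp [hx j (by simpa using hj)]
  have hφr : φ ^ (n + 1) = 1 :=
    (congrArg (φ ^ ·) (hord.trans hn).symm).trans (pow_orderOf_eq_one φ)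
  refine ⟨x * P, ?_, by simp [hPi, x]⟩
  show φ (x * P) = x * P
  calc φ (x * P) = ((List.range (n + 1)).map fun k => (φ ^ (k + 1)) x).prod := by
        simp [P, List.prod_range_succ', map_list_prod, pow_succ', Function.comp_def]
    _ = P * (φ ^ (n + 1)) x := List.prod_range_succ _ _
    _ = x * P := by rw [hφr, MulAut.one_apply, hcomm]

end CyclicPermutation

theorem stmt9_general {Δ : Type u} [Group Δ] (hΔ : IsNonabelianSimple Δ)
    (r : ℕ) [NeZero r] (φ : MulAut (Fin r → Δ)) (hord : orderOf φ = r)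
    (hperm : ∀ i : Fin r,
      Subgroup.map φ.toMonoidHom (factorSub (Δ := fun _ : Fin r => Δ) i) = factorSub (i + 1))
    (H : Subgroup (Fin r → Δ)) (hiso : Nonempty (↥H ≃* Δ))
    (hnorm : ∀ d ∈ fixedSub φ, ∀ h ∈ H, d * h * d⁻¹ ∈ H) :
    IsDSubgroup φ H := by
  classical
  obtain ⟨e⟩ := hiso
  have := hΔ.1
  have : IsSimpleGroup H := e.isSimpleGroup
  have hD := exists_mem_fixedSub_apply_eq hord hperm
  set I := Finset.univ.filter fun j => ∃ h ∈ H, h j ≠ 1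
  have hI : ∀ j, j ∈ (I : Set (Fin r)) ↔ ∃ h ∈ H, h j ≠ 1 := by simp [I]
  obtain ⟨i, hi⟩ : I.Nonempty := by
    obtain ⟨h, hne⟩ := exists_ne (1 : H)
    obtain ⟨i, hi⟩ := Function.ne_iff.mp (Subtype.coe_ne_coe.mpr hne)
    exact ⟨i, (hI i).mpr ⟨h, h.2, hi⟩⟩
  have hrestrict {u d} (hu : u ∈ H) (hd : d ∈ fixedSub φ) (hud : u i = d i) :=
    eq_restrictSupp_of_apply_eq hΔ hD hnorm hI (Finset.mem_coe.mpr hi) hu hd hud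
  refine ⟨I, ⟨i, hi⟩, le_antisymm (fun u hu => ?_) ?_⟩
  · obtain ⟨d, hd, hdi⟩ := hD i (u i)
    exact ⟨d, hd, (hrestrict hu hd hdi.symm).symm⟩
  · rintro _ ⟨d, hd, rfl⟩
    obtain ⟨u, hu, hui⟩ := Subgroup.mem_map.mp
      (map_eval_eq_top_of_normalized hD hnorm ((hI i).mp hi) ▸ Subgroup.mem_top (d i))
    exact hrestrict hu hd hui ▸ hu

/-- **Lemma 3.6.** Under Hypothesis (*), a subgroup of `S` isomorphic to `S_1` and normalized
by the diagonal `D = C_S(φ)` is a `d`-subgroup. -/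
theorem stmt9 {Δ : Type u} [Group Δ] [Finite Δ] (hΔ : IsNonabelianSimple Δ)
    (r : ℕ) [NeZero r] (φ : MulAut (Fin r → Δ)) (hord : orderOf φ = r)
    (hperm : ∀ i : Fin r,
      Subgroup.map φ.toMonoidHom (factorSub (Δ := fun _ : Fin r => Δ) i) = factorSub (i + 1))
    (H : Subgroup (Fin r → Δ)) (hiso : Nonempty (↥H ≃* Δ))
    (hnorm : ∀ d ∈ fixedSub φ, ∀ h ∈ H, d * h * d⁻¹ ∈ H) :
    IsDSubgroup φ H :=
  stmt9_general hΔ r φ hord hperm H hiso hnorm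

end Statements
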